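/- arXiv:2307.06928 — 2 statements merged into one kernel-verified Lean document; each statement's English description precedes it below -/
import Mathlib

section
/- Types are downward closed with respect to the introduction of divergence: let M be a term, z a variable, and N, Q closed terms with Q ≲ N and M[N/z] closed. Then (i) for every type A, if M[N/z] ∈ T̄⟦A⟧ then M[Q/z] ∈ T̄⟦A⟧; and (ii) for every finitely verifiable type F, if M[N/z] ∉ T⟦F⟧ then M[Q/z] ∉ T⟦F⟧. -/
namespace PCF

/-- Terms of the simple CBV, PCF-like language.  Variables are natural numbers. -/
inductive Tm : Type
  | var : ℕ → Tm
  | zero : Tm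
  | succ : Tm → Tm
  | pred : Tm → Tm
  | ifz : Tm → Tm → Tm → Tm
  | abs : ℕ → Tm → Tm
  | app : Tm → Tm → Tm
  | fix : ℕ → Tm → Tm
  | pair : Tm → Tm → Tm
  | lett : ℕ → ℕ → Tm → Tm → Tm
  deriving DecidableEq

/-- The numeral `succ^n(zero)`. -/
def numeral : ℕ → Tm
  | 0 => .zero
  | n + 1 => .succ (numeral n)

/-- Values. -/
inductive IsValue : Tm → Prop
  | var (x : ℕ) : IsValue (.var x)
  | num (n : ℕ) : IsValue (numeral n)
  | pair {V W : Tm} : IsValue V → IsValue W → IsValue (.pair V W)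
  | abs (x : ℕ) (M : Tm) : IsValue (.abs x M)

/-- Capture-permitting substitution `M[N/x]` (adequate since we only ever
substitute closed terms). -/
def subst (x : ℕ) (N : Tm) : Tm → Tm
  | .var y => if y = x then N else .var y
  | .zero => .zero
  | .succ M => .succ (subst x N M)
  | .pred M => .pred (subst x N M)
  | .ifz M P Q => .ifz (subst x N M) (subst x N P) (subst x N Q)
  | .abs y M => if y = x then .abs y M else .abs y (subst x N M)
  | .app M P => .app (subst x N M) (subst x N P)
  | .fix y M => if y = x then .fix y M else .fix y (subst x N M)
  | .pair M P => .pair (subst x N M) (subst x N P)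
  | .lett y z M P =>
      .lett y z (subst x N M) (if y = x ∨ z = x then P else subst x N P)

/-- Free variables. -/
def fv : Tm → Finset ℕ
  | .var y => {y}
  | .zero => ∅
  | .succ M => fv M
  | .pred M => fv M
  | .ifz M P Q => fv M ∪ fv P ∪ fv Q
  | .abs y M => fv M \ {y}
  | .app M P => fv M ∪ fv P
  | .fix y M => fv M \ {y}
  | .pair M P => fv M ∪ fv P
  | .lett y z M P => fv M ∪ (fv P \ {y, z})

def ClosedTm (M : Tm) : Prop := fv M = ∅

/-- One-step call-by-value reduction (closure of the redex rules under
evaluation contexts). -/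
inductive Step : Tm → Tm → Prop
  | ifz_zero {N P : Tm} : Step (.ifz (numeral 0) N P) N
  | ifz_succ {n : ℕ} {N P : Tm} : Step (.ifz (numeral (n + 1)) N P) P
  | lett_beta {x y : ℕ} {V W M : Tm} : IsValue V → IsValue W →
      Step (.lett x y (.pair V W) M) (subst y W (subst x V M))
  | fix_step {x : ℕ} {M : Tm} : Step (.fix x M) (subst x (.fix x M) M)
  | pred_zero : Step (.pred (numeral 0)) (numeral 0)
  | pred_succ {n : ℕ} : Step (.pred (numeral (n + 1))) (numeral n)
  | beta {x : ℕ} {M V : Tm} : IsValue V → Step (.app (.abs x M) V) (subst x V M)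
  | succ_ctx {M M' : Tm} : Step M M' → Step (.succ M) (.succ M')
  | pred_ctx {M M' : Tm} : Step M M' → Step (.pred M) (.pred M')
  | pair_left {M M' N : Tm} : Step M M' → Step (.pair M N) (.pair M' N)
  | pair_right {V N N' : Tm} : IsValue V → Step N N' → Step (.pair V N) (.pair V N')
  | lett_ctx {x y : ℕ} {M M' N : Tm} : Step M M' → Step (.lett x y M N) (.lett x y M' N)
  | ifz_ctx {M M' N P : Tm} : Step M M' → Step (.ifz M N P) (.ifz M' N P)
  | app_right {x : ℕ} {M N N' : Tm} : Step N N' →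
      Step (.app (.abs x M) N) (.app (.abs x M) N')
  | app_left {M M' N : Tm} : Step M M' → Step (.app M N) (.app M' N)

/-- Many-step reduction. -/
def Steps : Tm → Tm → Prop := Relation.ReflTransGen Step

def NormalForm (M : Tm) : Prop := ¬ ∃ N, Step M N

def Evaluates (M : Tm) : Prop := ∃ V, Steps M V ∧ IsValue V

/-- `M` diverges: it has no normal form. -/
def Diverges (M : Tm) : Prop := ¬ ∃ N, Steps M N ∧ NormalForm N

def Stuck (M : Tm) : Prop := NormalForm M ∧ ¬ IsValue M

def GoesWrong (M : Tm) : Prop := ∃ P, Steps M P ∧ Stuck P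

/-- `div` = `fix x. x`. -/
def divTm : Tm := .fix 0 (.var 0)

/-- `P ≲ N`: if `P` reduces to a normal form then `N` reduces to the same
normal form. -/
def RefBelow (P N : Tm) : Prop := ∀ R, Steps P R → NormalForm R → Steps N R

/-- Fixpoint approximants. -/
def fixApprox (x : ℕ) (M : Tm) : ℕ → Tm
  | 0 => divTm
  | n + 1 => subst x (fixApprox x M n) M

/-- Finitely verifiable types. -/
inductive FTy : Type
  | nat : FTy
  | prod : FTy → FTy → FTy
  deriving DecidableEq

/-- Types: `Nat | A×B | A→B | A⇝F | Ok` (necessity arrows only to finitely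
verifiable types). -/
inductive Ty : Type
  | nat : Ty
  | prod : Ty → Ty → Ty
  | arrow : Ty → Ty → Ty
  | narrow : Ty → FTy → Ty
  | ok : Ty
  deriving DecidableEq

/-- Inclusion of finitely verifiable types into types. -/
def FTy.toTy : FTy → Ty
  | .nat => .nat
  | .prod A B => .prod A.toTy B.toTy

/-- `T⟦·⟧` applied to a set of values: the terms that evaluate into it. -/
def TSem (Sv : Tm → Prop) (M : Tm) : Prop :=
  ClosedTm M ∧ ∃ V, Steps M V ∧ IsValue V ∧ Sv V

/-- `T̄⟦·⟧`: evaluate into the set, or diverge. -/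
def TBarSem (Sv : Tm → Prop) (M : Tm) : Prop :=
  TSem Sv M ∨ (ClosedTm M ∧ Diverges M)

/-- Semantics of finitely verifiable types. -/
def FSem : FTy → Tm → Prop
  | .nat => fun M => ∃ n, M = numeral n
  | .prod A B => fun M => ∃ V W, M = .pair V W ∧ FSem A V ∧ FSem B W

/-- Semantics of types, as sets of closed values. -/
def Sem : Ty → Tm → Prop
  | .nat => fun M => ∃ n, M = numeral n
  | .prod A B => fun M => ∃ V W, M = .pair V W ∧ Sem A V ∧ Sem B W
  | .arrow A B => fun M => ∃ x P, M = .abs x P ∧ ClosedTm M ∧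
      ∀ V, ClosedTm V → IsValue V → Sem A V → TBarSem (Sem B) (subst x V P)
  | .narrow A F => fun M => ∃ x P, M = .abs x P ∧ ClosedTm M ∧
      ∀ V, ClosedTm V → IsValue V → TSem (FSem F) (subst x V P) → Sem A V
  | .ok => fun M => ClosedTm M ∧ IsValue M

/-- Typing formulas `M : A`. -/
structure Formula where
  tm : Tm
  ty : Ty
  deriving DecidableEq

/-- Make a formula. -/
def fm (M : Tm) (A : Ty) : Formula := ⟨M, A⟩

/-- `x` does not occur free in any formula of `Γ`. -/
def FreshFor (x : ℕ) (Γ : Finset Formula) : Prop := ∀ φ ∈ Γ, x ∉ fv φ.tm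

def IsArrowTy (A : Ty) : Prop :=
  (∃ B C, A = .arrow B C) ∨ (∃ B F, A = .narrow B F)

def IsProdTy (A : Ty) : Prop := ∃ B C, A = .prod B C

/-- Disjointness of types: one is `Nat` and the other is not, or one is an
arrow and the other is not, or one is a product and the other is not. -/
def Disj (A B : Ty) : Prop :=
  (A = .nat ∧ B ≠ .nat) ∨ (B = .nat ∧ A ≠ .nat) ∨
  (IsArrowTy A ∧ ¬ IsArrowTy B) ∨ (IsArrowTy B ∧ ¬ IsArrowTy A) ∨
  (IsProdTy A ∧ ¬ IsProdTy B) ∨ (IsProdTy B ∧ ¬ IsProdTy A)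

/-- The two-sided type system (including the `Ok` rules). -/
inductive Der : Finset Formula → Finset Formula → Prop
  | id (Γ Δ : Finset Formula) (x : ℕ) (A : Ty) :
      Der (insert (fm (.var x) A) Γ) (insert (fm (.var x) A) Δ)
  | dis {Γ Δ : Finset Formula} {M : Tm} {A B : Ty} :
      Disj A B → Der Γ (insert (fm M B) Δ) → Der (insert (fm M A) Γ) Δ
  | zeroR (Γ Δ : Finset Formula) : Der Γ (insert (fm .zero .nat) Δ)
  | succR {Γ Δ M} : Der Γ (insert (fm M .nat) Δ) → Der Γ (insert (fm (.succ M) .nat) Δ)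
  | predR {Γ Δ M} : Der Γ (insert (fm M .nat) Δ) → Der Γ (insert (fm (.pred M) .nat) Δ)
  | letR {Γ Δ : Finset Formula} {x y : ℕ} {M N : Tm} {A B C : Ty} :
      Der Γ (insert (fm M (.prod B C)) Δ) →
      Der (insert (fm (.var x) B) (insert (fm (.var y) C) Γ)) (insert (fm N A) Δ) →
      FreshFor x Γ → FreshFor x Δ → FreshFor y Γ → FreshFor y Δ →
      Der Γ (insert (fm (.lett x y M N) A) Δ)
  | appR {Γ Δ M N A B} :
      Der Γ (insert (fm M (.arrow B A)) Δ) → Der Γ (insert (fm N B) Δ) →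
      Der Γ (insert (fm (.app M N) A) Δ)
  | pairR {Γ Δ M N A B} :
      Der Γ (insert (fm M A) Δ) → Der Γ (insert (fm N B) Δ) →
      Der Γ (insert (fm (.pair M N) (.prod A B)) Δ)
  | absR {Γ Δ : Finset Formula} {x : ℕ} {M : Tm} {A B : Ty} :
      Der (insert (fm (.var x) B) Γ) (insert (fm M A) Δ) →
      FreshFor x Γ → FreshFor x Δ →
      Der Γ (insert (fm (.abs x M) (.arrow B A)) Δ)
  | abnR {Γ Δ : Finset Formula} {x : ℕ} {M : Tm} {B : Ty} {F : FTy} :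
      Der (insert (fm M F.toTy) Γ) (insert (fm (.var x) B) Δ) →
      FreshFor x Γ → FreshFor x Δ →
      Der Γ (insert (fm (.abs x M) (.narrow B F)) Δ)
  | fixR {Γ Δ : Finset Formula} {x : ℕ} {M : Tm} {A : Ty} :
      Der (insert (fm (.var x) A) Γ) (insert (fm M A) Δ) →
      FreshFor x Γ → FreshFor x Δ →
      Der Γ (insert (fm (.fix x M) A) Δ)
  | ifzR {Γ Δ M N P A} :
      Der Γ (insert (fm M .nat) Δ) → Der Γ (insert (fm N A) Δ) →
      Der Γ (insert (fm P A) Δ) →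
      Der Γ (insert (fm (.ifz M N P) A) Δ)
  | succL {Γ Δ M} : Der (insert (fm M .nat) Γ) Δ → Der (insert (fm (.succ M) .nat) Γ) Δ
  | predL {Γ Δ M} : Der (insert (fm M .nat) Γ) Δ → Der (insert (fm (.pred M) .nat) Γ) Δ
  | appL {Γ Δ : Finset Formula} {M N : Tm} {B : Ty} {A : FTy} :
      Der Γ (insert (fm M (.narrow B A)) Δ) → Der (insert (fm N B) Γ) Δ →
      Der (insert (fm (.app M N) A.toTy) Γ) Δ
  | pairL1 {Γ Δ M1 M2 A1 A2} : Der (insert (fm M1 A1) Γ) Δ →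
      Der (insert (fm (.pair M1 M2) (.prod A1 A2)) Γ) Δ
  | pairL2 {Γ Δ M1 M2 A1 A2} : Der (insert (fm M2 A2) Γ) Δ →
      Der (insert (fm (.pair M1 M2) (.prod A1 A2)) Γ) Δ
  | letL1 {Γ Δ : Finset Formula} {x y : ℕ} {M N : Tm} {A : Ty} :
      Der (insert (fm N A) Γ) Δ →
      FreshFor x Γ → FreshFor x Δ → FreshFor y Γ → FreshFor y Δ →
      Der (insert (fm (.lett x y M N) A) Γ) Δ
  | letL2 {Γ Δ : Finset Formula} {x y : ℕ} {M N : Tm} {A B1 B2 : Ty} :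
      Der (insert (fm M (.prod B1 B2)) Γ) Δ →
      Der (insert (fm N A) Γ) (insert (fm (.var x) B1) Δ) →
      Der (insert (fm N A) Γ) (insert (fm (.var y) B2) Δ) →
      FreshFor x Γ → FreshFor x Δ → FreshFor y Γ → FreshFor y Δ →
      Der (insert (fm (.lett x y M N) A) Γ) Δ
  | ifzL1 {Γ Δ M N P A} : Der (insert (fm M .nat) Γ) Δ →
      Der (insert (fm (.ifz M N P) A) Γ) Δ
  | ifzL2 {Γ Δ M N P A} : Der (insert (fm N A) Γ) Δ → Der (insert (fm P A) Γ) Δ →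
      Der (insert (fm (.ifz M N P) A) Γ) Δ
  | okVarR (Γ Δ : Finset Formula) (x : ℕ) : Der Γ (insert (fm (.var x) .ok) Δ)
  | okL {Γ Δ M A} : Der (insert (fm M .ok) Γ) Δ → Der (insert (fm M A) Γ) Δ
  | okR {Γ Δ M A} : Der Γ (insert (fm M A) Δ) → Der Γ (insert (fm M .ok) Δ)
  | okApL1 {Γ Δ M N A} : Der (insert (fm M (.narrow .ok A)) Γ) Δ →
      Der (insert (fm (.app M N) .ok) Γ) Δ
  | okApL2 {Γ Δ M N} : Der (insert (fm N .ok) Γ) Δ → Der (insert (fm (.app M N) .ok) Γ) Δ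
  | okSL {Γ Δ M} : Der (insert (fm M .nat) Γ) Δ → Der (insert (fm (.succ M) .ok) Γ) Δ
  | okPL {Γ Δ M} : Der (insert (fm M .nat) Γ) Δ → Der (insert (fm (.pred M) .ok) Γ) Δ
  | okPrL1 {Γ Δ M1 M2} : Der (insert (fm M1 .ok) Γ) Δ →
      Der (insert (fm (.pair M1 M2) .ok) Γ) Δ
  | okPrL2 {Γ Δ M1 M2} : Der (insert (fm M2 .ok) Γ) Δ →
      Der (insert (fm (.pair M1 M2) .ok) Γ) Δ

/-- Simultaneous substitution by a valuation (total substitution); suitable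
since valuations map variables to closed terms. -/
def msubst (θ : ℕ → Tm) : Tm → Tm
  | .var y => θ y
  | .zero => .zero
  | .succ M => .succ (msubst θ M)
  | .pred M => .pred (msubst θ M)
  | .ifz M P Q => .ifz (msubst θ M) (msubst θ P) (msubst θ Q)
  | .abs y M => .abs y (msubst (Function.update θ y (.var y)) M)
  | .app M P => .app (msubst θ M) (msubst θ P)
  | .fix y M => .fix y (msubst (Function.update θ y (.var y)) M)
  | .pair M P => .pair (msubst θ M) (msubst θ P)
  | .lett y z M P =>
      .lett y z (msubst θ M)
        (msubst (Function.update (Function.update θ y (.var y)) z (.var z)) P)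

/-- A valuation: a substitution by closed terms. -/
def ClosedVal (θ : ℕ → Tm) : Prop := ∀ x, ClosedTm (θ x)

/-- `θ` satisfies `M : A` on the left: `Mθ ∈ T⟦A⟧`. -/
def SatL (θ : ℕ → Tm) (φ : Formula) : Prop := TSem (Sem φ.ty) (msubst θ φ.tm)

/-- `θ` satisfies `M : A` on the right: `Mθ ∈ T̄⟦A⟧`. -/
def SatR (θ : ℕ → Tm) (φ : Formula) : Prop := TBarSem (Sem φ.ty) (msubst θ φ.tm)

/-- Truth of a judgement: `Γ ⊨ Δ`. -/
def Models (Γ Δ : Finset Formula) : Prop :=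
  ∀ θ : ℕ → Tm, ClosedVal θ → (∀ φ ∈ Γ, SatL θ φ) → ∃ φ ∈ Δ, SatR θ φ


/-! Write `S ⊑ T` when `S` arises from `T` by replacing some closed subterms `N` by closed terms
`Q ≲ N`; in particular `M[Q/z] ⊑ M[N/z]`. This relation is a weak simulation: every step of `S`
is matched by finitely many steps of `T`, and when `S` is a normal form, `T` reduces to a normal
form `W ⊒ S` of the same outer shape (both values or neither, the same numeral, abstractions or
pairs with related components). Since evaluation is deterministic, the value reached by `T` is
this `W`. The value set of every type is downward closed along `⊑`, by induction on the type;
the values of a finitely verifiable type contain no abstractions, so there `⊑` forces equality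
and membership transfers upwards. -/

theorem Step.not_numeral {n : ℕ} {M : Tm} : ¬ Step (numeral n) M := by
  induction n generalizing M with
  | zero => rintro ⟨⟩
  | succ n ih => intro h; cases h with | succ_ctx h => exact ih h

theorem IsValue.not_step {V M : Tm} (hV : IsValue V) : ¬ Step V M := by
  induction hV generalizing M with
  | num n => exact Step.not_numeral
  | pair _ _ ih₁ ih₂ =>
    intro h
    cases h with
    | pair_left h => exact ih₁ h
    | pair_right _ h => exact ih₂ h
  | _ => rintro ⟨⟩

theorem IsValue.normalForm {V : Tm} (hV : IsValue V) : NormalForm V :=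
  fun ⟨_, h⟩ => hV.not_step h

theorem Step.deterministic {M N₁ N₂ : Tm} (h₁ : Step M N₁) (h₂ : Step M N₂) : N₁ = N₂ := by
  induction h₁ generalizing N₂ with
  -- `cases` cannot solve `numeral m = numeral n`, so the redex is first generalized.
  | pred_succ =>
    generalize e : Tm.pred _ = T at h₂
    cases h₂ <;> grind [Step.not_numeral, numeral]
  | ifz_succ =>
    generalize e : Tm.ifz _ _ _ = T at h₂
    cases h₂ <;> grind [Step.not_numeral, numeral]
  | _ =>
    cases h₂ <;> first
      | rfl
      | grind [Step.not_numeral, IsValue.not_step, IsValue.abs, IsValue.pair]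

theorem Steps.eq_of_normalForm {M R : Tm} (h : Steps M R) (hM : NormalForm M) : R = M := by
  rcases h.cases_head with rfl | ⟨_, hs, _⟩
  exacts [rfl, absurd ⟨_, hs⟩ hM]

theorem Steps.normalForm_unique {M R R' : Tm} (h : Steps M R) (h' : Steps M R')
    (hR : NormalForm R) (hR' : NormalForm R') : R = R' := by
  induction h using Relation.ReflTransGen.head_induction_on with
  | refl => exact (h'.eq_of_normalForm hR).symm
  | head hs _ ih =>
    rcases h'.cases_head with rfl | ⟨_, hs', h'⟩
    · exact absurd ⟨_, hs⟩ hR'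
    · exact ih (hs.deterministic hs' ▸ h')

theorem RefBelow.eq_of_normalForm {Q N : Tm} (h : RefBelow Q N) (hQ : NormalForm Q)
    (hN : NormalForm N) : Q = N :=
  (h Q .refl hQ).eq_of_normalForm hN

namespace Steps

variable {M M' : Tm}

theorem succ (h : Steps M M') : Steps (.succ M) (.succ M') :=
  Relation.ReflTransGen.lift Tm.succ (fun _ _ => Step.succ_ctx) _ _ h

theorem pred (h : Steps M M') : Steps (.pred M) (.pred M') :=
  Relation.ReflTransGen.lift Tm.pred (fun _ _ => Step.pred_ctx) _ _ h

theorem ifz {P Q : Tm} (h : Steps M M') : Steps (.ifz M P Q) (.ifz M' P Q) :=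
  Relation.ReflTransGen.lift (Tm.ifz · P Q) (fun _ _ => Step.ifz_ctx) _ _ h

theorem pair_left {P : Tm} (h : Steps M M') : Steps (.pair M P) (.pair M' P) :=
  Relation.ReflTransGen.lift (Tm.pair · P) (fun _ _ => Step.pair_left) _ _ h

theorem pair_right {V : Tm} (h : Steps M M') (hV : IsValue V) : Steps (.pair V M) (.pair V M') :=
  Relation.ReflTransGen.lift (Tm.pair V) (fun _ _ => Step.pair_right hV) _ _ h

theorem lett {x y : ℕ} {P : Tm} (h : Steps M M') : Steps (.lett x y M P) (.lett x y M' P) :=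
  Relation.ReflTransGen.lift (Tm.lett x y · P) (fun _ _ => Step.lett_ctx) _ _ h

theorem app_left {P : Tm} (h : Steps M M') : Steps (.app M P) (.app M' P) :=
  Relation.ReflTransGen.lift (Tm.app · P) (fun _ _ => Step.app_left) _ _ h

theorem app_right {x : ℕ} {B : Tm} (h : Steps M M') :
    Steps (.app (.abs x B) M) (.app (.abs x B) M') :=
  Relation.ReflTransGen.lift (Tm.app (.abs x B)) (fun _ _ => Step.app_right) _ _ h

end Steps

theorem isValue_pair_iff {M P : Tm} : IsValue (.pair M P) ↔ IsValue M ∧ IsValue P := by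
  constructor
  · intro h
    generalize e : Tm.pair M P = V at h
    cases h with
    | num n => cases n <;> cases e
    | pair hV hW => cases e; exact ⟨hV, hW⟩
    | _ => cases e
  · exact fun ⟨hM, hP⟩ => .pair hM hP

theorem Sem.isValue {A : Ty} {V : Tm} (h : Sem A V) : IsValue V := by
  induction A generalizing V with
  | nat => obtain ⟨n, rfl⟩ := h; exact .num n
  | prod A B ihA ihB => obtain ⟨V, W, rfl, hV, hW⟩ := h; exact .pair (ihA hV) (ihB hW)
  | arrow | narrow => obtain ⟨x, P, rfl, -⟩ := h; exact .abs x P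
  | ok => exact h.2

theorem FSem.isValue {F : FTy} {V : Tm} (h : FSem F V) : IsValue V := by
  induction F generalizing V with
  | nat => obtain ⟨n, rfl⟩ := h; exact .num n
  | prod A B ihA ihB => obtain ⟨V, W, rfl, hV, hW⟩ := h; exact .pair (ihA hV) (ihB hW)

theorem normalForm_succ_iff {M : Tm} : NormalForm (.succ M) ↔ NormalForm M := by
  refine ⟨fun h ⟨_, s⟩ => h ⟨_, .succ_ctx s⟩, fun hM ⟨_, s⟩ => ?_⟩
  cases s with
  | succ_ctx s => exact hM ⟨_, s⟩

theorem normalForm_pred_iff {M : Tm} :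
    NormalForm (.pred M) ↔ NormalForm M ∧ ∀ n, M ≠ numeral n := by
  refine ⟨fun h => ⟨fun ⟨_, s⟩ => h ⟨_, .pred_ctx s⟩, ?_⟩, fun ⟨hM, hn⟩ ⟨_, s⟩ => ?_⟩
  · rintro (_ | n) rfl
    exacts [h ⟨_, .pred_zero⟩, h ⟨_, .pred_succ⟩]
  · cases s with
    | pred_zero => exact hn 0 rfl
    | pred_succ => exact hn _ rfl
    | pred_ctx s => exact hM ⟨_, s⟩

theorem normalForm_ifz_iff {M P Q : Tm} :
    NormalForm (.ifz M P Q) ↔ NormalForm M ∧ ∀ n, M ≠ numeral n := by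
  refine ⟨fun h => ⟨fun ⟨_, s⟩ => h ⟨_, .ifz_ctx s⟩, ?_⟩, fun ⟨hM, hn⟩ ⟨_, s⟩ => ?_⟩
  · rintro (_ | n) rfl
    exacts [h ⟨_, .ifz_zero⟩, h ⟨_, .ifz_succ⟩]
  · cases s with
    | ifz_zero => exact hn 0 rfl
    | ifz_succ => exact hn _ rfl
    | ifz_ctx s => exact hM ⟨_, s⟩

theorem normalForm_app_iff {M P : Tm} : NormalForm (.app M P) ↔
    NormalForm M ∧ ∀ x B, M = .abs x B → NormalForm P ∧ ¬ IsValue P := by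
  refine ⟨fun h => ⟨fun ⟨_, s⟩ => h ⟨_, .app_left s⟩, ?_⟩, fun ⟨hM, hP⟩ ⟨_, s⟩ => ?_⟩
  · rintro x B rfl
    exact ⟨fun ⟨_, s⟩ => h ⟨_, .app_right s⟩, fun hv => h ⟨_, .beta hv⟩⟩
  · cases s with
    | beta hv => exact (hP _ _ rfl).2 hv
    | app_right s => exact (hP _ _ rfl).1 ⟨_, s⟩
    | app_left s => exact hM ⟨_, s⟩

theorem normalForm_pair_iff {M P : Tm} :
    NormalForm (.pair M P) ↔ NormalForm M ∧ (IsValue M → NormalForm P) := by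
  refine ⟨fun h => ⟨fun ⟨_, s⟩ => h ⟨_, .pair_left s⟩, fun hv ⟨_, s⟩ => h ⟨_, .pair_right hv s⟩⟩,
    fun ⟨hM, hP⟩ ⟨_, s⟩ => ?_⟩
  cases s with
  | pair_left s => exact hM ⟨_, s⟩
  | pair_right hv s => exact hP hv ⟨_, s⟩

theorem normalForm_lett_iff {x y : ℕ} {M P : Tm} : NormalForm (.lett x y M P) ↔
    NormalForm M ∧ ∀ V W, M = .pair V W → ¬ IsValue M := by
  refine ⟨fun h => ⟨fun ⟨_, s⟩ => h ⟨_, .lett_ctx s⟩, ?_⟩, fun ⟨hM, hP⟩ ⟨_, s⟩ => ?_⟩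
  · rintro V W rfl hv
    obtain ⟨hV, hW⟩ := isValue_pair_iff.mp hv
    exact h ⟨_, .lett_beta hV hW⟩
  · cases s with
    | lett_beta hV hW => exact hP _ _ rfl (.pair hV hW)
    | lett_ctx s => exact hM ⟨_, s⟩

theorem not_normalForm_fix {x : ℕ} {M : Tm} : ¬ NormalForm (.fix x M) :=
  fun h => h ⟨_, .fix_step⟩

theorem fv_subst_subset (x : ℕ) (V M : Tm) : fv (subst x V M) ⊆ fv M \ {x} ∪ fv V := by
  induction M <;> simp only [subst, fv] <;> (try split_ifs) <;> grind [fv]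

theorem Step.fv_subset {M M' : Tm} (h : Step M M') : fv M' ⊆ fv M := by
  induction h <;> simp only [fv] <;> grind [fv_subst_subset, numeral, fv]

theorem subst_eq_self_of_notMem_fv {x : ℕ} {V M : Tm} (h : x ∉ fv M) : subst x V M = M := by
  induction M <;> simp only [subst, fv] at * <;> (try split_ifs) <;> grind

theorem ClosedTm.of_step {M M' : Tm} (hM : ClosedTm M) (h : Step M M') : ClosedTm M' :=
  Finset.subset_empty.mp (hM ▸ h.fv_subset)

theorem ClosedTm.subst_eq {x : ℕ} {V M : Tm} (hM : ClosedTm M) : subst x V M = M :=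
  subst_eq_self_of_notMem_fv (by simp [show fv M = ∅ from hM])

/-- The relation `⊑`: the compatible closure of `RefBelow` on closed terms. -/
inductive Approx : Tm → Tm → Prop
  | hole {Q N : Tm} : ClosedTm Q → ClosedTm N → RefBelow Q N → Approx Q N
  | var (x : ℕ) : Approx (.var x) (.var x)
  | zero : Approx .zero .zero
  | succ {M M' : Tm} : Approx M M' → Approx (.succ M) (.succ M')
  | pred {M M' : Tm} : Approx M M' → Approx (.pred M) (.pred M')
  | ifz {M M' P P' Q Q' : Tm} : Approx M M' → Approx P P' → Approx Q Q' →
      Approx (.ifz M P Q) (.ifz M' P' Q')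
  | abs (x : ℕ) {B B' : Tm} : Approx B B' → Approx (.abs x B) (.abs x B')
  | app {M M' P P' : Tm} : Approx M M' → Approx P P' → Approx (.app M P) (.app M' P')
  | fix (x : ℕ) {B B' : Tm} : Approx B B' → Approx (.fix x B) (.fix x B')
  | pair {M M' P P' : Tm} : Approx M M' → Approx P P' → Approx (.pair M P) (.pair M' P')
  | lett (x y : ℕ) {M M' P P' : Tm} : Approx M M' → Approx P P' →
      Approx (.lett x y M P) (.lett x y M' P')

namespace Approx

theorem refl (M : Tm) : Approx M M := by
  induction M with
  | var x => exact .var x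
  | zero => exact .zero
  | succ _ ih => exact .succ ih
  | pred _ ih => exact .pred ih
  | ifz _ _ _ ih₁ ih₂ ih₃ => exact .ifz ih₁ ih₂ ih₃
  | abs x _ ih => exact .abs x ih
  | app _ _ ih₁ ih₂ => exact .app ih₁ ih₂
  | fix x _ ih => exact .fix x ih
  | pair _ _ ih₁ ih₂ => exact .pair ih₁ ih₂
  | lett x y _ _ ih₁ ih₂ => exact .lett x y ih₁ ih₂

theorem fv_eq {S T : Tm} (h : Approx S T) : fv S = fv T := by
  induction h with
  | hole hQ hN => exact hQ.trans hN.symm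
  | _ => simp only [fv, *]

theorem closedTm_iff {S T : Tm} (h : Approx S T) : ClosedTm S ↔ ClosedTm T := by
  unfold ClosedTm; rw [h.fv_eq]

theorem subst {x : ℕ} {S T V W : Tm} (h : Approx S T) (hVW : Approx V W) :
    Approx (subst x V S) (subst x W T) := by
  induction h with
  | hole hQ hN hle => rw [hQ.subst_eq, hN.subst_eq]; exact .hole hQ hN hle
  | var y =>
    simp only [PCF.subst]
    split_ifs
    exacts [hVW, .var y]
  | zero => exact .zero
  | succ _ ih => exact .succ ih
  | pred _ ih => exact .pred ih
  | ifz _ _ _ ih₁ ih₂ ih₃ => exact .ifz ih₁ ih₂ ih₃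
  | abs y h ih =>
    simp only [PCF.subst]
    split_ifs
    exacts [.abs y h, .abs y ih]
  | app _ _ ih₁ ih₂ => exact .app ih₁ ih₂
  | fix y h ih =>
    simp only [PCF.subst]
    split_ifs
    exacts [.fix y h, .fix y ih]
  | pair _ _ ih₁ ih₂ => exact .pair ih₁ ih₂
  | lett y y' _ h ih₁ ih₂ =>
    simp only [PCF.subst]
    split_ifs
    exacts [.lett y y' ih₁ h, .lett y y' ih₁ ih₂]

theorem of_numeral_left {n : ℕ} {W : Tm} (h : Approx (numeral n) W) (hW : NormalForm W) :
    W = numeral n := by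
  induction n generalizing W with
  | zero =>
    cases h with
    | hole _ _ hle => exact (hle.eq_of_normalForm (IsValue.num 0).normalForm hW).symm
    | zero => rfl
  | succ n ih =>
    cases h with
    | hole _ _ hle => exact (hle.eq_of_normalForm (IsValue.num _).normalForm hW).symm
    | succ h => rw [ih h (normalForm_succ_iff.mp hW)]; rfl

theorem of_numeral_right {n : ℕ} {V : Tm} (h : Approx V (numeral n)) (hV : NormalForm V) :
    V = numeral n := by
  induction n generalizing V with
  | zero =>
    cases h with
    | hole _ _ hle => exact hle.eq_of_normalForm hV (IsValue.num 0).normalForm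
    | zero => rfl
  | succ n ih =>
    cases h with
    | hole _ _ hle => exact hle.eq_of_normalForm hV (IsValue.num _).normalForm
    | succ h => rw [ih h (normalForm_succ_iff.mp hV)]; rfl

theorem isValue_right {V W : Tm} (h : Approx V W) (hV : IsValue V) (hW : NormalForm W) :
    IsValue W := by
  induction hV generalizing W with
  | num n => exact h.of_numeral_left hW ▸ .num n
  | pair hV₁ hV₂ ih₁ ih₂ =>
    cases h with
    | hole _ _ hle => exact hle.eq_of_normalForm (hV₁.pair hV₂).normalForm hW ▸ hV₁.pair hV₂
    | pair h₁ h₂ =>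
      obtain ⟨hW₁, hW₂⟩ := normalForm_pair_iff.mp hW
      have hw₁ := ih₁ h₁ hW₁
      exact .pair hw₁ (ih₂ h₂ (hW₂ hw₁))
  | var x =>
    cases h with
    | hole _ _ hle => exact hle.eq_of_normalForm (IsValue.var x).normalForm hW ▸ .var x
    | var => exact .var x
  | abs x B =>
    cases h with
    | hole _ _ hle => exact hle.eq_of_normalForm (IsValue.abs x B).normalForm hW ▸ .abs x B
    | abs _ _ => exact .abs _ _

theorem isValue_left {V W : Tm} (h : Approx V W) (hV : NormalForm V) (hW : IsValue W) :
    IsValue V := by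
  induction hW generalizing V with
  | num n => exact h.of_numeral_right hV ▸ .num n
  | pair hW₁ hW₂ ih₁ ih₂ =>
    cases h with
    | hole _ _ hle => exact (hle.eq_of_normalForm hV (hW₁.pair hW₂).normalForm).symm ▸ hW₁.pair hW₂
    | pair h₁ h₂ =>
      obtain ⟨hV₁, hV₂⟩ := normalForm_pair_iff.mp hV
      have hv₁ := ih₁ h₁ hV₁
      exact .pair hv₁ (ih₂ h₂ (hV₂ hv₁))
  | var x =>
    cases h with
    | hole _ _ hle => exact (hle.eq_of_normalForm hV (IsValue.var x).normalForm).symm ▸ .var x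
    | var => exact .var x
  | abs x B =>
    cases h with
    | hole _ _ hle => exact (hle.eq_of_normalForm hV (IsValue.abs x B).normalForm).symm ▸ .abs x B
    | abs _ _ => exact .abs _ _

theorem of_abs_left {x : ℕ} {B W : Tm} (h : Approx (.abs x B) W) (hW : NormalForm W) :
    ∃ B', W = .abs x B' ∧ Approx B B' := by
  cases h with
  | hole _ _ hle => exact ⟨B, (hle.eq_of_normalForm (IsValue.abs x B).normalForm hW).symm, refl B⟩
  | abs _ h => exact ⟨_, rfl, h⟩

theorem of_abs_right {x : ℕ} {V B' : Tm} (h : Approx V (.abs x B')) (hV : NormalForm V) :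
    ∃ B, V = .abs x B ∧ Approx B B' := by
  cases h with
  | hole _ _ hle => exact ⟨B', hle.eq_of_normalForm hV (IsValue.abs x B').normalForm, refl B'⟩
  | abs _ h => exact ⟨_, rfl, h⟩

theorem of_pair_left {V₁ V₂ W : Tm} (h : Approx (.pair V₁ V₂) W) (hV : NormalForm (.pair V₁ V₂))
    (hW : NormalForm W) : ∃ W₁ W₂, W = .pair W₁ W₂ ∧ Approx V₁ W₁ ∧ Approx V₂ W₂ := by
  cases h with
  | hole _ _ hle => exact ⟨V₁, V₂, (hle.eq_of_normalForm hV hW).symm, refl V₁, refl V₂⟩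
  | pair h₁ h₂ => exact ⟨_, _, rfl, h₁, h₂⟩

theorem of_pair_right {V W₁ W₂ : Tm} (h : Approx V (.pair W₁ W₂)) (hV : NormalForm V)
    (hW : NormalForm (.pair W₁ W₂)) : ∃ V₁ V₂, V = .pair V₁ V₂ ∧ Approx V₁ W₁ ∧ Approx V₂ W₂ := by
  cases h with
  | hole _ _ hle => exact ⟨W₁, W₂, hle.eq_of_normalForm hV hW, refl W₁, refl W₂⟩
  | pair h₁ h₂ => exact ⟨_, _, rfl, h₁, h₂⟩

theorem exists_steps_normalForm {V T : Tm} (h : Approx V T) (hV : NormalForm V) :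
    ∃ W, Steps T W ∧ NormalForm W ∧ Approx V W := by
  induction h with
  | hole _ _ hle => exact ⟨_, hle _ .refl hV, hV, refl _⟩
  | var | zero => exact ⟨_, .refl, hV, refl _⟩
  | abs x h => exact ⟨_, .refl, (IsValue.abs _ _).normalForm, .abs x h⟩
  | fix => exact absurd hV not_normalForm_fix
  | succ _ ih =>
    obtain ⟨W, hs, hW, hVW⟩ := ih (normalForm_succ_iff.mp hV)
    exact ⟨_, hs.succ, normalForm_succ_iff.mpr hW, .succ hVW⟩
  | pred _ ih =>
    obtain ⟨hV₁, hnum⟩ := normalForm_pred_iff.mp hV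
    obtain ⟨W, hs, hW, hVW⟩ := ih hV₁
    refine ⟨_, hs.pred, normalForm_pred_iff.mpr ⟨hW, ?_⟩, .pred hVW⟩
    rintro n rfl
    exact hnum n (hVW.of_numeral_right hV₁)
  | ifz _ hP hQ ih =>
    obtain ⟨hV₁, hnum⟩ := normalForm_ifz_iff.mp hV
    obtain ⟨W, hs, hW, hVW⟩ := ih hV₁
    refine ⟨_, hs.ifz, normalForm_ifz_iff.mpr ⟨hW, ?_⟩, .ifz hVW hP hQ⟩
    rintro n rfl
    exact hnum n (hVW.of_numeral_right hV₁)
  | app _ h₂ ih₁ ih₂ =>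
    obtain ⟨hV₁, hV₂⟩ := normalForm_app_iff.mp hV
    obtain ⟨W₁, hs₁, hW₁, hVW₁⟩ := ih₁ hV₁
    by_cases habs : ∃ x B', W₁ = .abs x B'
    · obtain ⟨x, B', rfl⟩ := habs
      obtain ⟨B, rfl, -⟩ := hVW₁.of_abs_right hV₁
      obtain ⟨hV₂, hV₂nv⟩ := hV₂ x B rfl
      obtain ⟨W₂, hs₂, hW₂, hVW₂⟩ := ih₂ hV₂
      refine ⟨_, hs₁.app_left.trans hs₂.app_right, normalForm_app_iff.mpr ⟨hW₁, ?_⟩,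
        .app hVW₁ hVW₂⟩
      rintro _ _ ⟨⟩
      exact ⟨hW₂, fun hw => hV₂nv (hVW₂.isValue_left hV₂ hw)⟩
    · exact ⟨_, hs₁.app_left,
        normalForm_app_iff.mpr ⟨hW₁, fun x B e => absurd ⟨x, B, e⟩ habs⟩, .app hVW₁ h₂⟩
  | @pair V₁ _ _ _ _ h₂ ih₁ ih₂ =>
    obtain ⟨hV₁, hV₂⟩ := normalForm_pair_iff.mp hV
    obtain ⟨W₁, hs₁, hW₁, hVW₁⟩ := ih₁ hV₁
    by_cases hv : IsValue V₁
    · obtain ⟨W₂, hs₂, hW₂, hVW₂⟩ := ih₂ (hV₂ hv)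
      exact ⟨_, hs₁.pair_left.trans (hs₂.pair_right (hVW₁.isValue_right hv hW₁)),
        normalForm_pair_iff.mpr ⟨hW₁, fun _ => hW₂⟩, .pair hVW₁ hVW₂⟩
    · exact ⟨_, hs₁.pair_left,
        normalForm_pair_iff.mpr ⟨hW₁, fun hw => absurd (hVW₁.isValue_left hV₁ hw) hv⟩,
        .pair hVW₁ h₂⟩
  | lett x y _ hP ih =>
    obtain ⟨hV₁, hV₁nv⟩ := normalForm_lett_iff.mp hV
    obtain ⟨W₁, hs₁, hW₁, hVW₁⟩ := ih hV₁
    refine ⟨_, hs₁.lett, normalForm_lett_iff.mpr ⟨hW₁, ?_⟩, .lett x y hVW₁ hP⟩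
    rintro _ _ rfl hw
    obtain ⟨_, _, rfl, -⟩ := hVW₁.of_pair_right hV₁ hW₁
    exact hV₁nv _ _ rfl (hVW₁.isValue_left hV₁ hw)

theorem exists_steps_isValue {V T : Tm} (h : Approx V T) (hV : IsValue V) :
    ∃ W, Steps T W ∧ IsValue W ∧ Approx V W := by
  obtain ⟨W, hs, hW, hVW⟩ := h.exists_steps_normalForm hV.normalForm
  exact ⟨W, hs, hVW.isValue_right hV hW, hVW⟩

theorem steps_numeral {n : ℕ} {T : Tm} (h : Approx (numeral n) T) : Steps T (numeral n) := by
  obtain ⟨W, hs, hW, hVW⟩ := h.exists_steps_normalForm (IsValue.num n).normalForm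
  exact hVW.of_numeral_left hW ▸ hs

theorem exists_steps_abs {x : ℕ} {B T : Tm} (h : Approx (.abs x B) T) :
    ∃ B', Steps T (.abs x B') ∧ Approx B B' := by
  obtain ⟨W, hs, hW, hBW⟩ := h.exists_steps_isValue (.abs x B)
  obtain ⟨B', rfl, hB⟩ := hBW.of_abs_left hW.normalForm
  exact ⟨B', hs, hB⟩

theorem exists_steps_of_beta {x : ℕ} {B V T₁ T₂ : Tm} (h₁ : Approx (.abs x B) T₁)
    (h₂ : Approx V T₂) (hV : IsValue V) :
    ∃ T', Steps (.app T₁ T₂) T' ∧ Approx (PCF.subst x V B) T' := by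
  obtain ⟨B', hs₁, hB⟩ := h₁.exists_steps_abs
  obtain ⟨W, hs₂, hW, hVW⟩ := h₂.exists_steps_isValue hV
  exact ⟨_, (hs₁.app_left.trans hs₂.app_right).tail (.beta hW), hB.subst hVW⟩

theorem exists_steps_of_lett_beta {x y : ℕ} {V₁ V₂ P P' T : Tm} (h : Approx (.pair V₁ V₂) T)
    (hP : Approx P P') (hV₁ : IsValue V₁) (hV₂ : IsValue V₂) :
    ∃ T', Steps (.lett x y T P') T' ∧ Approx (PCF.subst y V₂ (PCF.subst x V₁ P)) T' := by
  obtain ⟨W, hs, hW, hVW⟩ := h.exists_steps_isValue (hV₁.pair hV₂)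
  obtain ⟨W₁, W₂, rfl, h₁, h₂⟩ := hVW.of_pair_left (hV₁.pair hV₂).normalForm hW.normalForm
  obtain ⟨hW₁, hW₂⟩ := isValue_pair_iff.mp hW
  exact ⟨_, hs.lett.tail (.lett_beta hW₁ hW₂), (hP.subst h₁).subst h₂⟩

theorem exists_steps_of_step {S T S' : Tm} (h : Approx S T) (hs : Step S S') :
    ∃ T', Steps T T' ∧ Approx S' T' := by
  induction h generalizing S' with
  | hole hQ hN hle =>
    exact ⟨_, .refl, .hole (hQ.of_step hs) hN fun R hR hRnf => hle R (.head hs hR) hRnf⟩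
  | var | zero | abs => cases hs
  | succ _ ih =>
    cases hs with
    | succ_ctx hs =>
      obtain ⟨_, ht, h'⟩ := ih hs
      exact ⟨_, ht.succ, .succ h'⟩
  | pred h ih =>
    cases hs with
    | pred_zero => exact ⟨_, h.steps_numeral.pred.tail .pred_zero, refl _⟩
    | pred_succ => exact ⟨_, h.steps_numeral.pred.tail .pred_succ, refl _⟩
    | pred_ctx hs =>
      obtain ⟨_, ht, h'⟩ := ih hs
      exact ⟨_, ht.pred, .pred h'⟩
  | ifz h hP hQ ih =>
    cases hs with
    | ifz_zero => exact ⟨_, h.steps_numeral.ifz.tail .ifz_zero, hP⟩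
    | ifz_succ => exact ⟨_, h.steps_numeral.ifz.tail .ifz_succ, hQ⟩
    | ifz_ctx hs =>
      obtain ⟨_, ht, h'⟩ := ih hs
      exact ⟨_, ht.ifz, .ifz h' hP hQ⟩
  | fix x h =>
    cases hs with
    | fix_step => exact ⟨_, .single .fix_step, h.subst (.fix x h)⟩
  | app h₁ h₂ ih₁ ih₂ =>
    cases hs with
    | app_left hs =>
      obtain ⟨_, ht, h'⟩ := ih₁ hs
      exact ⟨_, ht.app_left, .app h' h₂⟩
    | app_right hs =>
      obtain ⟨B', hs₁, hB⟩ := h₁.exists_steps_abs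
      obtain ⟨_, ht, h'⟩ := ih₂ hs
      exact ⟨_, hs₁.app_left.trans ht.app_right, .app (.abs _ hB) h'⟩
    | beta hv => exact exists_steps_of_beta h₁ h₂ hv
  | pair h₁ h₂ ih₁ ih₂ =>
    cases hs with
    | pair_left hs =>
      obtain ⟨_, ht, h'⟩ := ih₁ hs
      exact ⟨_, ht.pair_left, .pair h' h₂⟩
    | pair_right hv hs =>
      obtain ⟨W, hs₁, hW, hVW⟩ := h₁.exists_steps_isValue hv
      obtain ⟨_, ht, h'⟩ := ih₂ hs
      exact ⟨_, hs₁.pair_left.trans (ht.pair_right hW), .pair hVW h'⟩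
  | lett x y h hP ih =>
    cases hs with
    | lett_ctx hs =>
      obtain ⟨_, ht, h'⟩ := ih hs
      exact ⟨_, ht.lett, .lett x y h' hP⟩
    | lett_beta hv hw => exact exists_steps_of_lett_beta h hP hv hw

theorem exists_steps_of_steps {S T S' : Tm} (h : Approx S T) (hs : Steps S S') :
    ∃ T', Steps T T' ∧ Approx S' T' := by
  induction hs using Relation.ReflTransGen.head_induction_on generalizing T with
  | refl => exact ⟨T, .refl, h⟩
  | head hs _ ih =>
    obtain ⟨T₁, ht₁, h₁⟩ := h.exists_steps_of_step hs
    obtain ⟨T', ht', h'⟩ := ih h₁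
    exact ⟨T', ht₁.trans ht', h'⟩

theorem eq_of_fSem {F : FTy} {V W : Tm} (h : Approx V W) (hV : FSem F V) (hW : NormalForm W) :
    W = V := by
  induction F generalizing V W with
  | nat => obtain ⟨n, rfl⟩ := hV; exact h.of_numeral_left hW
  | prod A B ihA ihB =>
    obtain ⟨V₁, V₂, rfl, hV₁, hV₂⟩ := hV
    obtain ⟨W₁, W₂, rfl, h₁, h₂⟩ := h.of_pair_left (hV₁.isValue.pair hV₂.isValue).normalForm hW
    obtain ⟨hW₁, hW₂⟩ := normalForm_pair_iff.mp hW
    obtain rfl := ihA h₁ hV₁ hW₁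
    rw [ihB h₂ hV₂ (hW₂ hV₁.isValue)]

theorem tSem_fSem {F : FTy} {S T : Tm} (h : Approx S T) (hS : TSem (FSem F) S) :
    TSem (FSem F) T := by
  obtain ⟨hcl, V, hSV, hV, hFV⟩ := hS
  obtain ⟨T₁, hTT₁, h₁⟩ := h.exists_steps_of_steps hSV
  obtain ⟨W, hT₁W, hW, hVW⟩ := h₁.exists_steps_normalForm hV.normalForm
  exact ⟨h.closedTm_iff.mp hcl, V, hTT₁.trans (hVW.eq_of_fSem hFV hW ▸ hT₁W), hV, hFV⟩

theorem tBarSem {Sv : Tm → Prop} (hSv : ∀ ⦃V W⦄, Approx V W → IsValue V → Sv W → Sv V)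
    {S T : Tm} (h : Approx S T) (hT : TBarSem Sv T) : TBarSem Sv S := by
  have hcl : ClosedTm S := h.closedTm_iff.mpr (by rcases hT with ⟨hcl, -⟩ | ⟨hcl, -⟩ <;> exact hcl)
  by_cases hdiv : Diverges S
  · exact .inr ⟨hcl, hdiv⟩
  obtain ⟨R, hSR, hR⟩ := not_not.mp hdiv
  obtain ⟨T₁, hTT₁, h₁⟩ := h.exists_steps_of_steps hSR
  obtain ⟨W, hT₁W, hW, hRW⟩ := h₁.exists_steps_normalForm hR
  rcases hT with ⟨-, U, hTU, hU, hSvU⟩ | ⟨-, hTdiv⟩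
  · obtain rfl := hTU.normalForm_unique (hTT₁.trans hT₁W) hU.normalForm hW
    have hRv := hRW.isValue_left hR hU
    exact .inl ⟨hcl, R, hSR, hRv, hSv hRW hRv hSvU⟩
  · exact absurd ⟨W, hTT₁.trans hT₁W, hW⟩ hTdiv

theorem sem {A : Ty} {V W : Tm} (h : Approx V W) (hV : IsValue V) (hW : Sem A W) : Sem A V := by
  induction A generalizing V W with
  | nat =>
    obtain ⟨n, rfl⟩ := hW
    exact ⟨n, h.of_numeral_right hV.normalForm⟩
  | prod A B ihA ihB =>
    obtain ⟨W₁, W₂, rfl, hW₁, hW₂⟩ := hW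
    obtain ⟨V₁, V₂, rfl, h₁, h₂⟩ :=
      h.of_pair_right hV.normalForm (hW₁.isValue.pair hW₂.isValue).normalForm
    obtain ⟨hV₁, hV₂⟩ := isValue_pair_iff.mp hV
    exact ⟨V₁, V₂, rfl, ihA h₁ hV₁ hW₁, ihB h₂ hV₂ hW₂⟩
  | arrow A B _ ihB =>
    obtain ⟨x, P, rfl, hcl, hP⟩ := hW
    obtain ⟨B, rfl, hB⟩ := h.of_abs_right hV.normalForm
    exact ⟨x, B, rfl, h.closedTm_iff.mpr hcl, fun U hUc hU hAU =>
      (hB.subst (refl U)).tBarSem (fun _ _ => ihB) (hP U hUc hU hAU)⟩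
  | narrow A F =>
    obtain ⟨x, P, rfl, hcl, hP⟩ := hW
    obtain ⟨B, rfl, hB⟩ := h.of_abs_right hV.normalForm
    exact ⟨x, B, rfl, h.closedTm_iff.mpr hcl, fun U hUc hU hFU =>
      hP U hUc hU ((hB.subst (refl U)).tSem_fSem hFU)⟩
  | ok => exact ⟨h.closedTm_iff.mpr hW.1, hV⟩

end Approx

theorem types_downward_closed_general (M : Tm) (z : ℕ) (N Q : Tm)
    (hN : ClosedTm N) (hQ : ClosedTm Q) (hle : RefBelow Q N) :
    (∀ A : Ty, TBarSem (Sem A) (subst z N M) → TBarSem (Sem A) (subst z Q M)) ∧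
    (∀ F : FTy, ¬ TSem (FSem F) (subst z N M) → ¬ TSem (FSem F) (subst z Q M)) := by
  have h : Approx (subst z Q M) (subst z N M) := (Approx.refl M).subst (.hole hQ hN hle)
  exact ⟨fun A => h.tBarSem fun _ _ => Approx.sem, fun F hNF hQF => hNF (h.tSem_fSem hQF)⟩

/-- Types are downward closed w.r.t. the introduction of
divergence. -/
theorem types_downward_closed (M : Tm) (z : ℕ) (N Q : Tm)
    (hN : ClosedTm N) (hQ : ClosedTm Q) (hle : RefBelow Q N)
    (hcl : ClosedTm (subst z N M)) :
    (∀ A : Ty, TBarSem (Sem A) (subst z N M) → TBarSem (Sem A) (subst z Q M)) ∧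
    (∀ F : FTy, ¬ TSem (FSem F) (subst z N M) → ¬ TSem (FSem F) (subst z Q M)) :=
  types_downward_closed_general M z N Q hN hQ hle

end PCF
end

section
/- Soundness of the algorithmic constrained type system relative to the declarative one: for every finite set Γ of typing and subtype formulas and every set Δ of at most one typing formula, if Typ(Γ) | Con(Γ) ⊢₂ Δ is derivable in the algorithmic system, then Γ ⊢ Δ is derivable in the declarative two-sided constrained type system. -/
namespace Constr

/-- A finite signature of ranked datatype constructors, including a binary
pair constructor. -/
structure Signature where
  C : Type
  fin : Fintype C
  deceq : DecidableEq C
  arity : C → ℕ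
  pairC : C
  pair_arity : arity pairC = 2

instance (S : Signature) : Fintype S.C := S.fin
instance (S : Signature) : DecidableEq S.C := S.deceq

variable {S : Signature}

/-- Terms of the constructor language.  Local variables and top-level
identifiers are natural numbers.  A match term carries the scrutinee, the
(finite) set `I` of constructors that head its alternatives, the pattern
variables of each alternative, and the bodies of the alternatives. -/
inductive Tm (S : Signature) : Type
  | var : ℕ → Tm S
  | top : ℕ → Tm S
  | cns : (c : S.C) → (Fin (S.arity c) → Tm S) → Tm S
  | app : Tm S → Tm S → Tm S
  | abs : ℕ → Tm S → Tm S
  | fix : ℕ → Tm S → Tm S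
  | mtch : Tm S → Finset S.C → ((c : S.C) → Fin (S.arity c) → ℕ) → (S.C → Tm S) → Tm S

/-- Values: variables, abstractions and constructor terms whose arguments are
all values. -/
inductive IsVal : Tm S → Prop
  | var (x : ℕ) : IsVal (.var x)
  | abs (x : ℕ) (M : Tm S) : IsVal (.abs x M)
  | cns {c : S.C} {args : Fin (S.arity c) → Tm S} :
      (∀ i, IsVal (args i)) → IsVal (.cns c args)

/-- Capture-permitting substitution `M[N/x]` (adequate for closed `N`). -/
def subst (x : ℕ) (N : Tm S) : Tm S → Tm S
  | .var y => if y = x then N else .var y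
  | .top f => .top f
  | .cns c args => .cns c (fun i => subst x N (args i))
  | .app M P => .app (subst x N M) (subst x N P)
  | .abs y M => if y = x then .abs y M else .abs y (subst x N M)
  | .fix y M => if y = x then .fix y M else .fix y (subst x N M)
  | .mtch M I pv bs =>
      .mtch (subst x N M) I pv
        (fun c => if ∃ i, pv c i = x then bs c else subst x N (bs c))

/-- The free (local) variable relation. -/
inductive FreeIn (x : ℕ) : Tm S → Prop
  | var : FreeIn x (.var x)
  | cns {c : S.C} {args : Fin (S.arity c) → Tm S} (i : Fin (S.arity c)) :
      FreeIn x (args i) → FreeIn x (.cns c args)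
  | appL {M N} : FreeIn x M → FreeIn x (.app M N)
  | appR {M N} : FreeIn x N → FreeIn x (.app M N)
  | abs {y M} : x ≠ y → FreeIn x M → FreeIn x (.abs y M)
  | fix {y M} : x ≠ y → FreeIn x M → FreeIn x (.fix y M)
  | mtchScrut {M I pv bs} : FreeIn x M → FreeIn x (.mtch M I pv bs)
  | mtchBody {M I pv bs} {c : S.C} : c ∈ I → (∀ i, pv c i ≠ x) →
      FreeIn x (bs c) → FreeIn x (.mtch M I pv bs)

/-- A term is closed if it has no free local variables (it may contain
top-level identifiers). -/
def ClosedTm (M : Tm S) : Prop := ∀ x, ¬ FreeIn x M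

/-- Iterated substitution (used for simultaneous pattern matching; adequate
since pattern variables are pairwise distinct and matched values closed). -/
def substSim (ps : List (ℕ × Tm S)) (M : Tm S) : Tm S :=
  ps.foldl (fun acc p => subst p.1 p.2 acc) M

/-- A module: a finite map from top-level identifiers to terms. -/
def Module (S : Signature) : Type := ℕ → Option (Tm S)

/-- One-step CBV reduction relative to a module. -/
inductive Step (mod : Module S) : Tm S → Tm S → Prop
  | top {f M} : mod f = some M → Step mod (.top f) M
  | beta {x M V} : IsVal V → Step mod (.app (.abs x M) V) (subst x V M)
  | fixStep {x M} : Step mod (.fix x M) (subst x (.fix x M) M)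
  | mtchStep {c : S.C} {vs : Fin (S.arity c) → Tm S} {I pv bs} :
      c ∈ I → (∀ i, IsVal (vs i)) →
      Step mod (.mtch (.cns c vs) I pv bs)
        (substSim (List.ofFn (fun i => (pv c i, vs i))) (bs c))
  | cnsCtx {c : S.C} {args : Fin (S.arity c) → Tm S} {i : Fin (S.arity c)} {M'} :
      (∀ j : Fin (S.arity c), (j : ℕ) < (i : ℕ) → IsVal (args j)) →
      Step mod (args i) M' →
      Step mod (.cns c args) (.cns c (Function.update args i M'))
  | appL {M M' N} : Step mod M M' → Step mod (.app M N) (.app M' N)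
  | appR {x M N N'} : Step mod N N' →
      Step mod (.app (.abs x M) N) (.app (.abs x M) N')
  | mtchCtx {M M' I pv bs} : Step mod M M' →
      Step mod (.mtch M I pv bs) (.mtch M' I pv bs)

/-- Many-step reduction. -/
def Steps (mod : Module S) : Tm S → Tm S → Prop := Relation.ReflTransGen (Step mod)

def NormalForm (mod : Module S) (M : Tm S) : Prop := ¬ ∃ N, Step mod M N

/-- Constrained monotypes.  A sum type carries the finite set `I` of its head
constructors together with the argument types of each summand. -/
inductive CTy (S : Signature) : Type
  | tvar : ℕ → CTy S
  | ok : CTy S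
  | arrow : CTy S → CTy S → CTy S
  | narrow : CTy S → CTy S → CTy S
  | sum : Finset S.C → ((c : S.C) → Fin (S.arity c) → CTy S) → CTy S

noncomputable instance : DecidableEq (CTy S) := Classical.decEq _
noncomputable instance : DecidableEq (Tm S) := Classical.decEq _

/-- Constrained subtyping `C ⊢ A ⊑ B`. -/
inductive Sub (Cs : Set (CTy S × CTy S)) : CTy S → CTy S → Prop
  | id {A B} : (A, B) ∈ Cs → Sub Cs A B
  | tr {A B C'} : Sub Cs A B → Sub Cs B C' → Sub Cs A C'
  | arr {A A' B B'} : Sub Cs A' A → Sub Cs B B' → Sub Cs (.arrow A B) (.arrow A' B')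
  | nar {A A' B B'} : Sub Cs A A' → Sub Cs B' B → Sub Cs (.narrow A B) (.narrow A' B')
  | ok {A} : Sub Cs A .ok
  | sum {I J : Finset S.C} {f g} : I ⊆ J → (∀ c ∈ I, ∀ i, Sub Cs (f c i) (g c i)) →
      Sub Cs (.sum I f) (.sum J g)

/-- A constrained type scheme `∀ ā. C ⇒ A`. -/
structure Scheme (S : Signature) where
  vars : Finset ℕ
  cons : Finset (CTy S × CTy S)
  ty : CTy S

noncomputable instance : DecidableEq (Scheme S) := Classical.decEq _

/-- Formulas appearing in contexts: typing formulas `M : A`, top-level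
identifier typings `f : S`, and subtype formulas `A ⊑ B`. -/
inductive CFormula (S : Signature) : Type
  | tm : Tm S → CTy S → CFormula S
  | idt : ℕ → Scheme S → CFormula S
  | sub : CTy S → CTy S → CFormula S

noncomputable instance : DecidableEq (CFormula S) := Classical.decEq _

/-- The subtype constraints contained in a context. -/
def conOf (Γ : Finset (CFormula S)) : Set (CTy S × CTy S) :=
  {p | CFormula.sub p.1 p.2 ∈ Γ}

/-- `Γ ⊢ A ⊑ B`: subtyping derivable from the subtype formulas of `Γ`. -/
def ctxSub (Γ : Finset (CFormula S)) (A B : CTy S) : Prop := Sub (conOf Γ) A B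

/-- Substitution of types for type variables. -/
def tsubst (σ : ℕ → CTy S) : CTy S → CTy S
  | .tvar a => σ a
  | .ok => .ok
  | .arrow A B => .arrow (tsubst σ A) (tsubst σ B)
  | .narrow A B => .narrow (tsubst σ A) (tsubst σ B)
  | .sum I g => .sum I (fun c i => tsubst σ (g c i))

/-- Free type variables. -/
inductive TFreeIn (a : ℕ) : CTy S → Prop
  | tvar : TFreeIn a (.tvar a)
  | arrL {A B} : TFreeIn a A → TFreeIn a (.arrow A B)
  | arrR {A B} : TFreeIn a B → TFreeIn a (.arrow A B)
  | narL {A B} : TFreeIn a A → TFreeIn a (.narrow A B)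
  | narR {A B} : TFreeIn a B → TFreeIn a (.narrow A B)
  | sum {I g} {c : S.C} (i) : c ∈ I → TFreeIn a (g c i) → TFreeIn a (.sum I g)

/-- The pair term `(M, N)`, built with the distinguished pair constructor. -/
def pairTm (M N : Tm S) : Tm S :=
  .cns S.pairC (fun i => if (i : ℕ) = 0 then M else N)

/-- The pair type `(A, B)`. -/
def pairTy (A B : CTy S) : CTy S :=
  .sum {S.pairC} (fun _ i => if (i : ℕ) = 0 then A else B)

/-- `x` does not occur in a formula (i.e., not free in its subject). -/
def FormFresh (x : ℕ) : CFormula S → Prop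
  | .tm M _ => ¬ FreeIn x M
  | _ => True

def CtxFresh (x : ℕ) (Γ : Finset (CFormula S)) : Prop := ∀ φ ∈ Γ, FormFresh x φ

def DFresh (x : ℕ) : Option (Tm S × CTy S) → Prop
  | none => True
  | some p => ¬ FreeIn x p.1

/-- The typing context `{x : B_x | x ∈ FV(p)}` induced by a pattern. -/
noncomputable def patCtx (c : S.C) (pv : Fin (S.arity c) → ℕ)
    (Bs : Fin (S.arity c) → CTy S) : Finset (CFormula S) :=
  Finset.image (fun i => CFormula.tm (.var (pv i)) (Bs i)) Finset.univ

/-- Derivations of the two-sided constrained type system.  The right-hand side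
is a set of at most one typing formula, represented by an `Option`. -/
inductive CDer : Finset (CFormula S) → Option (Tm S × CTy S) → Type
  | varK (Γ : Finset (CFormula S)) (x : ℕ) :
      CDer Γ (some (.var x, .ok))
  | gvar {Γ : Finset (CFormula S)} (f : ℕ) (Sc : Scheme S) (σ : ℕ → CTy S) :
      (∀ a, a ∉ Sc.vars → σ a = .tvar a) →
      (∀ p ∈ Sc.cons, ctxSub (insert (CFormula.idt f Sc) Γ) (tsubst σ p.1) (tsubst σ p.2)) →
      CDer (insert (CFormula.idt f Sc) Γ) (some (.top f, tsubst σ Sc.ty))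
  | lvar (Γ : Finset (CFormula S)) (x : ℕ) (A : CTy S) :
      CDer (insert (CFormula.tm (.var x) A) Γ) (some (.var x, A))
  | subL {Γ Δ M A B} : ctxSub Γ A B → CDer (insert (CFormula.tm M B) Γ) Δ →
      CDer (insert (CFormula.tm M A) Γ) Δ
  | subR {Γ M A B} : ctxSub Γ B A → CDer Γ (some (M, B)) → CDer Γ (some (M, A))
  | absR {Γ : Finset (CFormula S)} {x M A B} :
      CDer (insert (CFormula.tm (.var x) B) Γ) (some (M, A)) →
      CtxFresh x Γ → CDer Γ (some (.abs x M, .arrow B A))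
  | abnR {Γ : Finset (CFormula S)} {x M A B} :
      CDer (insert (CFormula.tm M A) Γ) (some (.var x, B)) →
      CtxFresh x Γ → CDer Γ (some (.abs x M, .narrow B A))
  | appL {Γ Δ M N A B} : CDer Γ (some (M, .narrow B A)) →
      CDer (insert (CFormula.tm N B) Γ) Δ →
      CDer (insert (CFormula.tm (.app M N) A) Γ) Δ
  | appR {Γ M N A B} : CDer Γ (some (M, .arrow B A)) → CDer Γ (some (N, B)) →
      CDer Γ (some (.app M N, A))
  | cnsL {Γ Δ} {c : S.C} {args : Fin (S.arity c) → Tm S} {J : Finset S.C}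
      {g : (c : S.C) → Fin (S.arity c) → CTy S} (i : Fin (S.arity c)) :
      c ∈ J → CDer (insert (CFormula.tm (args i) (g c i)) Γ) Δ →
      CDer (insert (CFormula.tm (.cns c args) (.sum J g)) Γ) Δ
  | cnsR {Γ} {c : S.C} {args : Fin (S.arity c) → Tm S}
      {g : (c : S.C) → Fin (S.arity c) → CTy S} :
      (∀ i, CDer Γ (some (args i, g c i))) →
      CDer Γ (some (.cns c args, .sum {c} g))
  | mchR {Γ M I pv bs A} {Bs : (c : S.C) → Fin (S.arity c) → CTy S} :
      CDer Γ (some (M, .sum I Bs)) →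
      (∀ c ∈ I, CDer (Γ ∪ patCtx c (pv c) (Bs c)) (some (bs c, A))) →
      (∀ c ∈ I, ∀ i, CtxFresh (pv c i) Γ) →
      CDer Γ (some (.mtch M I pv bs, A))
  | mchL {Γ Δ M I pv bs A} {Bs : (c : S.C) → Fin (S.arity c) → CTy S} :
      (∀ c ∈ I, ∀ i, CDer (insert (CFormula.tm (bs c) A) Γ) (some (.var (pv c i), Bs c i))) →
      (∀ c ∈ I, CDer (insert (CFormula.tm (pairTm M (bs c)) (pairTy (.sum {c} Bs) A)) Γ) Δ) →
      (∀ c ∈ I, ∀ i, CtxFresh (pv c i) Γ ∧ DFresh (pv c i) Δ) →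
      CDer (insert (CFormula.tm (.mtch M I pv bs) A) Γ) Δ
  | fixR {Γ : Finset (CFormula S)} {x M A} :
      CDer (insert (CFormula.tm (.var x) A) Γ) (some (M, A)) →
      CtxFresh x Γ → CDer Γ (some (.fix x M, A))
  | cnsK {Γ Δ} {c : S.C} {args : Fin (S.arity c) → Tm S} (i : Fin (S.arity c)) :
      CDer (insert (CFormula.tm (args i) .ok) Γ) Δ →
      CDer (insert (CFormula.tm (.cns c args) .ok) Γ) Δ
  | funK {Γ Δ M N A} : CDer (insert (CFormula.tm M (.narrow .ok A)) Γ) Δ →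
      CDer (insert (CFormula.tm (.app M N) .ok) Γ) Δ
  | cnsDL {Γ Δ} {c : S.C} {args : Fin (S.arity c) → Tm S} {A : CTy S} :
      ((∃ B1 B2, A = .arrow B1 B2) ∨ (∃ B1 B2, A = .narrow B1 B2) ∨
        (∃ I g, A = CTy.sum I g ∧ c ∉ I)) →
      CDer (insert (CFormula.tm (.cns c args) A) Γ) Δ
  | absDL {Γ : Finset (CFormula S)} {Δ} {x M} {I : Finset S.C} {g} :
      CDer (insert (CFormula.tm (.abs x M) (.sum I g)) Γ) Δ

/-- Syntactic consistency of a single constraint. -/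
def SynCons (p : CTy S × CTy S) : Prop :=
  (∃ a, p.1 = CTy.tvar a) ∨ (∃ a, p.2 = CTy.tvar a) ∨
  (∃ A1 A2 B1 B2, p.1 = CTy.arrow A1 A2 ∧ p.2 = CTy.arrow B1 B2) ∨
  (∃ A1 A2 B1 B2, p.1 = CTy.narrow A1 A2 ∧ p.2 = CTy.narrow B1 B2) ∨
  p.2 = CTy.ok ∨
  (∃ I : Finset S.C, ∃ f, ∃ J : Finset S.C, ∃ g, p.1 = CTy.sum I f ∧ p.2 = CTy.sum J g ∧ I ⊆ J)

/-- Closure of a constraint set. -/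
def ClosedCons (Cs : Set (CTy S × CTy S)) : Prop :=
  (∀ A A' B, (A, A') ∈ Cs → (A', B) ∈ Cs → (A, B) ∈ Cs) ∧
  (∀ I : Finset S.C, ∀ f, ∀ J : Finset S.C, ∀ g, (CTy.sum I f, CTy.sum J g) ∈ Cs →
      ∀ c, c ∈ I → c ∈ J → ∀ i, (f c i, g c i) ∈ Cs) ∧
  (∀ A B A' B', (CTy.arrow A B, CTy.arrow A' B') ∈ Cs → (A', A) ∈ Cs ∧ (B, B') ∈ Cs) ∧
  (∀ A B A' B', (CTy.narrow A B, CTy.narrow A' B') ∈ Cs → (A, A') ∈ Cs ∧ (B', B) ∈ Cs)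

/-- A consistent constraint set: closed and all constraints syntactically
consistent. -/
def ConsistentCons (Cs : Set (CTy S × CTy S)) : Prop :=
  ClosedCons Cs ∧ ∀ p ∈ Cs, SynCons p

/-- A type environment: subjects of typing formulas are variables or top-level
identifiers, with at most one type per subject. -/
def IsTypeEnv (Γ : Finset (CFormula S)) : Prop :=
  (∀ M A, CFormula.tm M A ∈ Γ → (∃ x, M = Tm.var x) ∨ (∃ f, M = Tm.top f)) ∧
  (∀ M A B, CFormula.tm M A ∈ Γ → CFormula.tm M B ∈ Γ → A = B) ∧
  (∀ f Sc Sc', CFormula.idt f Sc ∈ Γ → CFormula.idt f Sc' ∈ Γ → Sc = Sc')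

/-- A top-level type environment: all subjects are top-level identifiers. -/
def IsTopEnv (Γ : Finset (CFormula S)) : Prop :=
  IsTypeEnv Γ ∧ ∀ M A, CFormula.tm M A ∈ Γ → ∃ f, M = Tm.top f

/-- The environment is consistent: its subtype constraints are consistent. -/
def EnvConsistent (Γ : Finset (CFormula S)) : Prop := ConsistentCons (conOf Γ)

def IsSubjVar (x : ℕ) (Γ : Finset (CFormula S)) : Prop :=
  ∃ A, CFormula.tm (.var x) A ∈ Γ

def IsSubjId (f : ℕ) (Γ : Finset (CFormula S)) : Prop :=
  (∃ A, CFormula.tm (.top f) A ∈ Γ) ∨ (∃ Sc, CFormula.idt f Sc ∈ Γ)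

/-- Two environments have disjoint subjects. -/
def DisjSubj (Γ Δ : Finset (CFormula S)) : Prop :=
  (∀ x, ¬ (IsSubjVar x Γ ∧ IsSubjVar x Δ)) ∧
  (∀ f, ¬ (IsSubjId f Γ ∧ IsSubjId f Δ))

/-- `a` is free in the scheme `∀ ā. C ⇒ A` (ignoring the quantifier). -/
def schemeFV (a : ℕ) (Sc : Scheme S) : Prop :=
  (∃ p ∈ Sc.cons, TFreeIn a p.1 ∨ TFreeIn a p.2) ∨ TFreeIn a Sc.ty

/-- A set of constraints as subtype formulas. -/
noncomputable def consFormulas (Cs : Finset (CTy S × CTy S)) : Finset (CFormula S) :=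
  Cs.image (fun p => CFormula.sub p.1 p.2)

/-- `⊢ 𝓜 : Γ`: every top-level function of the module is a subject of `Γ`, and
every top-level typing `f : ∀ ā. C ⇒ A` in `Γ` (with `ā` the free type
variables of `C` and `A`) is justified by a derivation `Γ ∪ C ⊢ 𝓜(f) : A`. -/
def ModTyped (mod : Module S) (Γ : Finset (CFormula S)) : Prop :=
  (∀ f M, mod f = some M → IsSubjId f Γ) ∧
  (∀ f Sc, CFormula.idt f Sc ∈ Γ →
    (∀ a, a ∈ Sc.vars ↔ schemeFV a Sc) ∧
    ∃ M, mod f = some M ∧ Nonempty (CDer (Γ ∪ consFormulas Sc.cons) (some (M, Sc.ty))))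


/-- The algorithmic constrained type system `Γ | C ⊢₂ Δ`. -/
inductive ADer : Finset (CFormula S) → Set (CTy S × CTy S) → Option (Tm S × CTy S) → Prop
  | inst {Γ : Finset (CFormula S)} {C} {f : ℕ} {Sc : Scheme S} {A' : CTy S}
      (σ : ℕ → CTy S) :
      (∀ a, a ∉ Sc.vars → σ a = .tvar a) →
      (∀ p ∈ Sc.cons, Sub C (tsubst σ p.1) (tsubst σ p.2)) →
      Sub C (tsubst σ Sc.ty) A' →
      ADer (insert (CFormula.idt f Sc) Γ) C (some (.top f, A'))
  | var2 {Γ C x A B} : Sub C A B →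
      ADer (insert (CFormula.tm (.var x) A) Γ) C (some (.var x, B))
  | varK2 {Γ C} {x : ℕ} {A} : Sub C .ok A → ADer Γ C (some (.var x, A))
  | absR2 {Γ C x M A B1 B2} :
      ADer (insert (CFormula.tm (.var x) B1) Γ) C (some (M, B2)) →
      Sub C (.arrow B1 B2) A → CtxFresh x Γ → ADer Γ C (some (.abs x M, A))
  | abnR2 {Γ C x M A B1 B2} :
      ADer (insert (CFormula.tm M B1) Γ) C (some (.var x, B2)) →
      Sub C (.narrow B2 B1) A → CtxFresh x Γ → ADer Γ C (some (.abs x M, A))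
  | appR2 {Γ C M N A B1 B2} : ADer Γ C (some (M, B1)) → ADer Γ C (some (N, B2)) →
      Sub C B1 (.arrow B2 A) → ADer Γ C (some (.app M N, A))
  | appL2 {Γ C Δ M N A B1 B2} : ADer Γ C (some (M, B1)) →
      ADer (insert (CFormula.tm N B2) Γ) C Δ → Sub C B1 (.narrow B2 A) →
      ADer (insert (CFormula.tm (.app M N) A) Γ) C Δ
  | cnsL2 {Γ C Δ} {c : S.C} {args : Fin (S.arity c) → Tm S} {A : CTy S}
      {g : (d : S.C) → Fin (S.arity d) → CTy S} (i : Fin (S.arity c)) :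
      ADer (insert (CFormula.tm (args i) (g c i)) Γ) C Δ →
      Sub C A (.sum Finset.univ g) →
      ADer (insert (CFormula.tm (.cns c args) A) Γ) C Δ
  | cnsR2 {Γ C} {c : S.C} {args : Fin (S.arity c) → Tm S} {A : CTy S}
      {g : (d : S.C) → Fin (S.arity d) → CTy S} :
      (∀ i, ADer Γ C (some (args i, g c i))) → Sub C (.sum {c} g) A →
      ADer Γ C (some (.cns c args, A))
  | mchR2 {Γ C M I pv bs A B} {Bs : (c : S.C) → Fin (S.arity c) → CTy S}
      {As : S.C → CTy S} :
      ADer Γ C (some (M, B)) →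
      (∀ c ∈ I, ADer (Γ ∪ patCtx c (pv c) (Bs c)) C (some (bs c, As c))) →
      Sub C B (.sum I Bs) → (∀ c ∈ I, Sub C (As c) A) →
      (∀ c ∈ I, ∀ i, CtxFresh (pv c i) Γ) →
      ADer Γ C (some (.mtch M I pv bs, A))
  | mchL2 {Γ C Δ M I pv bs A} {A' : S.C → CTy S} {Ai : S.C → CTy S} {Bi : S.C → CTy S}
      {Ax : (c : S.C) → Fin (S.arity c) → CTy S}
      {Bx : (c : S.C) → Fin (S.arity c) → CTy S} :
      (∀ c ∈ I, ADer (insert (CFormula.tm (pairTm M (bs c)) (A' c)) Γ) C Δ) →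
      (∀ c ∈ I, ∀ i, ADer (insert (CFormula.tm (bs c) (Ax c i)) Γ) C
        (some (.var (pv c i), Bx c i))) →
      (∀ c ∈ I, Sub C A (Ai c)) →
      (∀ c ∈ I, Sub C (pairTy (Bi c) (Ai c)) (A' c)) →
      (∀ c ∈ I, ∀ i, Sub C A (Ax c i)) →
      (∀ c ∈ I, Sub C (.sum {c} Bx) (Bi c)) →
      (∀ c ∈ I, ∀ i, CtxFresh (pv c i) Γ ∧ DFresh (pv c i) Δ) →
      ADer (insert (CFormula.tm (.mtch M I pv bs) A) Γ) C Δ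
  | fixR2 {Γ C x M A B} : ADer (insert (CFormula.tm (.var x) A) Γ) C (some (M, B)) →
      Sub C B A → CtxFresh x Γ → ADer Γ C (some (.fix x M, A))
  | cnsK2 {Γ C Δ} {c : S.C} {args : Fin (S.arity c) → Tm S} {A B : CTy S}
      (i : Fin (S.arity c)) :
      ADer (insert (CFormula.tm (args i) B) Γ) C Δ → Sub C .ok B →
      ADer (insert (CFormula.tm (.cns c args) A) Γ) C Δ
  | funK2 {Γ C Δ M N A B} : ADer (insert (CFormula.tm M B) Γ) C Δ →
      Sub C (.narrow .ok A) B →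
      ADer (insert (CFormula.tm (.app M N) A) Γ) C Δ
  | cnsDL21 {Γ C Δ} {c : S.C} {args : Fin (S.arity c) → Tm S} {A B1 B2 : CTy S} :
      Sub C A (.arrow B1 B2) → ADer (insert (CFormula.tm (.cns c args) A) Γ) C Δ
  | cnsDL22 {Γ C Δ} {c : S.C} {args : Fin (S.arity c) → Tm S} {A B1 B2 : CTy S} :
      Sub C A (.narrow B1 B2) → ADer (insert (CFormula.tm (.cns c args) A) Γ) C Δ
  | cnsDL23 {Γ C Δ} {c : S.C} {args : Fin (S.arity c) → Tm S} {A : CTy S}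
      {g : (d : S.C) → Fin (S.arity d) → CTy S} :
      Sub C A (.sum (Finset.univ.erase c) g) →
      ADer (insert (CFormula.tm (.cns c args) A) Γ) C Δ
  | absDL2 {Γ C Δ} {x : ℕ} {M : Tm S} {A : CTy S}
      {g : (d : S.C) → Fin (S.arity d) → CTy S} :
      Sub C A (.sum Finset.univ g) →
      ADer (insert (CFormula.tm (.abs x M) A) Γ) C Δ

/-- Is a formula a typing formula (as opposed to a subtype formula)? -/
def isTypForm : CFormula S → Bool
  | .sub _ _ => false
  | _ => true

/-- `Typ(Γ)`: the typing formulas of `Γ`. -/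
def typOf (Γ : Finset (CFormula S)) : Finset (CFormula S) :=
  Γ.filter (fun φ => isTypForm φ)

/-! Every algorithmic rule is its declarative counterpart with the subtyping side conditions
folded in, so an algorithmic derivation is turned into a declarative one rule by rule, each
side condition `C ⊢ A ⊑ B` becoming an application of `SubL` or `SubR`.  For `CnsK2` and `FunK2`
the formula is first weakened to `Ok` by `SubL`, since `A ⊑ Ok` always holds. -/

theorem Sub.mono {Cs Cs' : Set (CTy S × CTy S)} (h : Cs ⊆ Cs') {A B : CTy S}
    (hAB : Sub Cs A B) : Sub Cs' A B := by
  induction hAB with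
  | id hp => exact .id (h hp)
  | tr _ _ ih₁ ih₂ => exact .tr ih₁ ih₂
  | arr _ _ ih₁ ih₂ => exact .arr ih₁ ih₂
  | nar _ _ ih₁ ih₂ => exact .nar ih₁ ih₂
  | ok => exact .ok
  | sum hIJ _ ih => exact .sum hIJ ih

theorem Sub.pairTy {Cs : Set (CTy S × CTy S)} {A A' B B' : CTy S} (hA : Sub Cs A A')
    (hB : Sub Cs B B') : Sub Cs (pairTy A B) (pairTy A' B') :=
  .sum subset_rfl fun _ _ i => by
    by_cases hi : (i : ℕ) = 0 <;> simp only [hi, if_true, if_false] <;> assumption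

theorem Sub.toCtxSub {C : Set (CTy S × CTy S)} {Γc Γ : Finset (CFormula S)} {A B : CTy S}
    (hAB : Sub C A B) (hC : C ⊆ conOf Γc) (hΓ : Γc ⊆ Γ) : ctxSub Γ A B :=
  hAB.mono fun _ hp => hΓ (hC hp)

theorem CtxFresh.union {x : ℕ} {Γ Γc : Finset (CFormula S)} (hΓ : CtxFresh x Γ)
    (hΓc : ∀ φ ∈ Γc, isTypForm φ = false) : CtxFresh x (Γ ∪ Γc) := by
  intro φ hφ
  rcases Finset.mem_union.1 hφ with hφ | hφ
  · exact hΓ φ hφ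
  · cases φ with
    | tm => exact absurd (hΓc _ hφ) Bool.noConfusion
    | _ => trivial

/- The declarative context is split as `Γ ∪ Γc`, with `Γc` the subtype formulas that justify
the constraints `C`; along the derivation only the typing part `Γ` changes. -/
theorem ADer.toCDer {Γ Γc : Finset (CFormula S)} {C : Set (CTy S × CTy S)}
    {Δ : Option (Tm S × CTy S)} (h : ADer Γ C Δ) (hΓc : ∀ φ ∈ Γc, isTypForm φ = false)
    (hC : C ⊆ conOf Γc) : Nonempty (CDer (Γ ∪ Γc) Δ) := by
  have hΓc_sub {Γ' : Finset (CFormula S)} : Γc ⊆ Γ' ∪ Γc := Finset.subset_union_right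
  have hΓc_sub' {Γ' : Finset (CFormula S)} {φ : CFormula S} : Γc ⊆ insert φ (Γ' ∪ Γc) :=
    hΓc_sub.trans (Finset.subset_insert _ _)
  induction h with
  | inst σ hσ hcons hty =>
    rw [Finset.insert_union]
    exact ⟨.subR (hty.toCtxSub hC hΓc_sub')
      (.gvar _ _ σ hσ fun p hp => (hcons p hp).toCtxSub hC hΓc_sub')⟩
  | var2 hAB =>
    rw [Finset.insert_union]
    exact ⟨.subR (hAB.toCtxSub hC hΓc_sub') (.lvar _ _ _)⟩
  | varK2 hok => exact ⟨.subR (hok.toCtxSub hC hΓc_sub) (.varK _ _)⟩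
  | absR2 _ hsub hx ih =>
    rw [Finset.insert_union] at ih
    exact ⟨.subR (hsub.toCtxSub hC hΓc_sub) (.absR (ih hC).some (hx.union hΓc))⟩
  | abnR2 _ hsub hx ih =>
    rw [Finset.insert_union] at ih
    exact ⟨.subR (hsub.toCtxSub hC hΓc_sub) (.abnR (ih hC).some (hx.union hΓc))⟩
  | appR2 _ _ hsub ihM ihN =>
    exact ⟨.appR (.subR (hsub.toCtxSub hC hΓc_sub) (ihM hC).some) (ihN hC).some⟩
  | appL2 _ _ hsub ihM ihN =>
    rw [Finset.insert_union] at ihN ⊢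
    exact ⟨.appL (.subR (hsub.toCtxSub hC hΓc_sub) (ihM hC).some) (ihN hC).some⟩
  | cnsL2 i _ hsub ih =>
    rw [Finset.insert_union] at ih ⊢
    exact ⟨.subL (hsub.toCtxSub hC hΓc_sub) (.cnsL i (Finset.mem_univ _) (ih hC).some)⟩
  | cnsR2 _ hsub ih => exact ⟨.subR (hsub.toCtxSub hC hΓc_sub) (.cnsR fun i => (ih i hC).some)⟩
  | mchR2 _ _ hsubB hsubA hx ihM ihbs =>
    refine ⟨.mchR (.subR (hsubB.toCtxSub hC hΓc_sub) (ihM hC).some) (fun c hc => ?_)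
      fun c hc i => (hx c hc i).union hΓc⟩
    rw [Finset.union_right_comm]
    exact .subR ((hsubA c hc).toCtxSub hC hΓc_sub) (ihbs c hc hC).some
  | mchL2 _ _ hsubA hsubP hsubAx hsubBx hx ihP ihx =>
    simp only [Finset.insert_union] at ihP ihx ⊢
    have hpair (c) (hc : c ∈ _) := (Sub.pairTy (hsubBx c hc) (hsubA c hc)).tr (hsubP c hc)
    exact ⟨.mchL
      (fun c hc i => .subL ((hsubAx c hc i).toCtxSub hC hΓc_sub) (ihx c hc i hC).some)
      (fun c hc => .subL ((hpair c hc).toCtxSub hC hΓc_sub) (ihP c hc hC).some)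
      fun c hc i => ⟨(hx c hc i).1.union hΓc, (hx c hc i).2⟩⟩
  | fixR2 _ hsub hx ih =>
    rw [Finset.insert_union] at ih
    exact ⟨.fixR (.subR (hsub.toCtxSub hC hΓc_sub') (ih hC).some) (hx.union hΓc)⟩
  | cnsK2 i _ hok ih =>
    rw [Finset.insert_union] at ih ⊢
    exact ⟨.subL Sub.ok (.cnsK i (.subL (hok.toCtxSub hC hΓc_sub) (ih hC).some))⟩
  | funK2 _ hsub ih =>
    rw [Finset.insert_union] at ih ⊢
    exact ⟨.subL Sub.ok (.funK (.subL (hsub.toCtxSub hC hΓc_sub) (ih hC).some))⟩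
  | cnsDL21 hsub =>
    rw [Finset.insert_union]
    exact ⟨.subL (hsub.toCtxSub hC hΓc_sub) (.cnsDL (.inl ⟨_, _, rfl⟩))⟩
  | cnsDL22 hsub =>
    rw [Finset.insert_union]
    exact ⟨.subL (hsub.toCtxSub hC hΓc_sub) (.cnsDL (.inr (.inl ⟨_, _, rfl⟩)))⟩
  | cnsDL23 hsub =>
    rw [Finset.insert_union]
    exact ⟨.subL (hsub.toCtxSub hC hΓc_sub)
      (.cnsDL (.inr (.inr ⟨_, _, rfl, Finset.notMem_erase _ _⟩)))⟩
  | absDL2 hsub =>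
    rw [Finset.insert_union]
    exact ⟨.subL (hsub.toCtxSub hC hΓc_sub) .absDL⟩

/-- Soundness of the algorithmic system relative to the
declarative one. -/
theorem algorithmic_soundness {S : Signature} (Γ : Finset (CFormula S))
    (Δ : Option (Tm S × CTy S)) (h : ADer (typOf Γ) (conOf Γ) Δ) :
    Nonempty (CDer Γ Δ) := by
  rw [← Finset.filter_union_filter_not_eq (fun φ => isTypForm φ) Γ]
  exact h.toCDer (fun φ hφ => by simpa using (Finset.mem_filter.1 hφ).2)
    fun p hp => Finset.mem_filter.2 ⟨hp, by simp [isTypForm]⟩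

end Constr
end
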